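/- arXiv:2602.07575 — 3 statements merged into one kernel-verified Lean document; each statement's English description precedes it below -/
import Mathlib

section
/- Let W := (I - (I - P)·X^{-1})^{-1}. Then the kernel of the linear map ℂ^m → ℂ^m, v ↦ (I - P)(I - X^{-1})·v, equals the range of the linear map ℂ^m → ℂ^m, v ↦ W·P·v. -/
/-!
`X = Cⁿ` is a weighted cyclic shift `v ↦ (i ↦ w i * v (i + n))` with nonzero weights, and `n`
generates `ℤ/m` because `gcd(m, n) = 1`. Since `n ∣ ∑ bᵢ` but `n ∤ m a`, some `bᵢ + a` is not
divisible by `n`, so `I - P` has a zero on the diagonal; this breaks the cycle, making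
`X - (I - P)` injective and hence `M := I - (I - P) X⁻¹ = (X - (I - P)) X⁻¹` invertible.
The rest is formal, using only that `P` is idempotent: `P M = P` and
`(I - P) M = (I - P)(I - X⁻¹)`, so `M = P + (I - P)(I - X⁻¹)`. Multiplying by `W = M⁻¹` gives
`W P = I - W (I - P)(I - X⁻¹)`, so the kernel lies in the range, while
`(I - P)(I - X⁻¹) W P = (I - P) M W P = (I - P) P = 0`.
-/

open Matrix

section WeightedShift

variable {ι R K : Type*} [Fintype ι] [DecidableEq ι] [CommRing R] [Field K]

def weightedShift [Add ι] (u : ι → R) (s : ι) : Matrix ι ι R :=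
  Matrix.of fun i j => if j = i + s then u i else 0

theorem weightedShift_mulVec [Add ι] (u : ι → R) (s : ι) (v : ι → R) :
    weightedShift u s *ᵥ v = fun i => u i * v (i + s) := by
  ext i
  simp [weightedShift, mulVec, dotProduct, ite_mul]

theorem weightedShift_mul [AddSemigroup ι] (u w : ι → R) (s r : ι) :
    weightedShift u s * weightedShift w r = weightedShift (fun i => u i * w (i + s)) (s + r) := by
  ext i j
  rw [mul_apply, Finset.sum_eq_single (i + s) (fun k _ hk => by simp [weightedShift, hk])
    (by simp)]
  simp [weightedShift, add_assoc]

theorem exists_weightedShift_pow [AddMonoid ι] [IsDomain R] {u : ι → R} (hu : ∀ i, u i ≠ 0)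
    (s : ι) (k : ℕ) :
    ∃ w : ι → R, (∀ i, w i ≠ 0) ∧ weightedShift u s ^ k = weightedShift w (k • s) := by
  induction k with
  | zero =>
    refine ⟨1, fun _ => one_ne_zero, ?_⟩
    ext i j
    simp [weightedShift, one_apply, eq_comm]
  | succ k ih =>
    obtain ⟨w, hw, hpow⟩ := ih
    exact ⟨_, fun i => mul_ne_zero (hw i) (hu _),
      by rw [pow_succ, hpow, weightedShift_mul, succ_nsmul]⟩

theorem isUnit_weightedShift [AddGroup ι] {u : ι → K} (hu : ∀ i, u i ≠ 0) (s : ι) :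
    IsUnit (weightedShift u s) := by
  rw [← mulVec_injective_iff_isUnit]
  intro v v' h
  funext j
  have hj := congrFun h (j - s)
  simp only [weightedShift_mulVec, sub_add_cancel] at hj
  exact mul_left_cancel₀ (hu _) hj

theorem isUnit_weightedShift_sub_diagonal [AddMonoid ι] {u q : ι → K} (hu : ∀ i, u i ≠ 0)
    {s i₀ : ι} (hq : q i₀ = 0) (hcover : ∀ j, ∃ k : ℕ, i₀ + s + k • s = j) :
    IsUnit (weightedShift u s - diagonal q) := by
  rw [← mulVec_injective_iff_isUnit, ← coe_mulVecLin, injective_iff_map_eq_zero]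
  intro v hv
  have hrec (i : ι) : u i * v (i + s) = q i * v i := by
    have := congrFun hv i
    rwa [mulVecLin_apply, sub_mulVec, weightedShift_mulVec, Pi.sub_apply, mulVec_diagonal,
      Pi.zero_apply, sub_eq_zero] at this
  -- `q i₀ = 0` starts the vanishing at `i₀ + s`; it then propagates along the orbit.
  have hzero (k : ℕ) : v (i₀ + s + k • s) = 0 := by
    induction k with
    | zero => simpa [hq, hu] using hrec i₀
    | succ k ih =>
      have h := hrec (i₀ + s + k • s)
      rw [ih, mul_zero] at h
      rw [succ_nsmul, ← add_assoc]
      exact (mul_eq_zero.mp h).resolve_left (hu _)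
  funext j
  obtain ⟨k, rfl⟩ := hcover j
  exact hzero k

end WeightedShift

theorem Fin.exists_add_add_nsmul_eq_of_coprime {m n : ℕ} [NeZero m] (hmn : m.Coprime n)
    (i j : Fin m) : ∃ k : ℕ, i + n • 1 + k • n • 1 = j := by
  open Fin.CommRing in
  obtain ⟨n', -, hn'⟩ := Nat.exists_mul_mod_eq_of_coprime 1 hmn.symm (NeZero.ne m)
  have hinv : (n : Fin m) * n' = 1 := by
    rw [← Nat.cast_mul]
    ext
    rw [Fin.val_natCast, hn', Fin.val_one']
  refine ⟨(j - i - n).val * n', ?_⟩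
  rw [nsmul_one, nsmul_eq_mul, Nat.cast_mul, Fin.cast_val_eq_self, mul_assoc,
    mul_comm (n' : Fin m), hinv, mul_one]
  abel

theorem cyclic_eq_weightedShift {m : ℕ} [NeZero m] (hm : 1 < m) {t : ℂ}
    {C : Matrix (Fin m) (Fin m) ℂ}
    (hC : ∀ i j : Fin m, C i j =
      if (i : ℕ) + 1 = (j : ℕ) then 1
      else if (i : ℕ) = m - 1 ∧ (j : ℕ) = 0 then t else 0) :
    C = weightedShift (fun i : Fin m => if (i : ℕ) = m - 1 then t else 1) 1 := by
  ext i j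
  have hval : ((i + 1 : Fin m) : ℕ) = (i + 1) % m := by
    rw [Fin.val_add, Fin.val_one', Nat.mod_eq_of_lt hm]
  rw [hC, weightedShift, of_apply]
  simp only [Fin.ext_iff, hval]
  have hi := i.is_lt
  rcases Nat.lt_or_ge ((i : ℕ) + 1) m with hlt | hge
  · rw [Nat.mod_eq_of_lt hlt]
    split_ifs <;> first | rfl | omega
  · rw [show (i : ℕ) + 1 = m by omega, Nat.mod_self]
    split_ifs <;> first | rfl | omega

theorem exists_not_dvd_add_of_coprime {ι : Type*} [Fintype ι] {n : ℕ}
    (hcop : (Fintype.card ι).Coprime n) {b : ι → ℤ} (hb : (n : ℤ) ∣ ∑ i, b i) {a : ℤ}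
    (ha : ¬ (n : ℤ) ∣ a) : ∃ i, ¬ (n : ℤ) ∣ b i + a := by
  by_contra! h
  have hsum : (n : ℤ) ∣ ∑ i, (b i + a) := Finset.dvd_sum fun i _ => h i
  rw [Finset.sum_add_distrib, Finset.sum_const, Finset.card_univ, nsmul_eq_mul] at hsum
  exact ha ((Nat.isCoprime_iff_coprime.mpr hcop.symm).dvd_of_dvd_mul_left
    ((dvd_add_right hb).mp hsum))

section Projection

variable {ι R : Type*} [Fintype ι] [DecidableEq ι] [CommRing R]

theorem isUnit_one_sub_mul_nonsing_inv {A B : Matrix ι ι R} (hA : IsUnit A)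
    (hAB : IsUnit (A - B)) : IsUnit (1 - B * A⁻¹) := by
  rw [show 1 - B * A⁻¹ = (A - B) * A⁻¹ by
    rw [sub_mul, mul_nonsing_inv _ ((isUnit_iff_isUnit_det A).mp hA)]]
  exact hAB.mul (isUnit_nonsing_inv_iff.mpr hA)

theorem ker_mulVecLin_eq_range_nonsing_inv_mul {P Y : Matrix ι ι R} (hP : IsIdempotentElem P)
    (hM : IsUnit (1 - (1 - P) * Y)) :
    LinearMap.ker ((1 - P) * (1 - Y)).mulVecLin =
      LinearMap.range ((1 - (1 - P) * Y)⁻¹ * P).mulVecLin := by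
  set M := 1 - (1 - P) * Y
  set W := M⁻¹
  have hdet : IsUnit M.det := (isUnit_iff_isUnit_det M).mp hM
  have hQM : (1 - P) * M = (1 - P) * (1 - Y) := by
    rw [mul_sub, mul_one, ← mul_assoc, hP.one_sub.eq, mul_sub, mul_one]
  have hPM : P * M = P := by
    rw [mul_sub, mul_one, ← mul_assoc, hP.mul_one_sub_self, zero_mul, sub_zero]
  have hsplit : P = M - (1 - P) * (1 - Y) := by
    rw [← hQM, sub_mul, one_mul, sub_sub_cancel, hPM]
  have hWP : W * P = 1 - W * ((1 - P) * (1 - Y)) := by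
    conv_lhs => rw [hsplit]
    rw [mul_sub, nonsing_inv_mul M hdet]
  have hvanish : (1 - P) * (1 - Y) * (W * P) = 0 := by
    rw [← hQM, mul_assoc, ← mul_assoc M, mul_nonsing_inv M hdet, one_mul, hP.one_sub_mul_self]
  ext x
  simp only [LinearMap.mem_ker, LinearMap.mem_range, mulVecLin_apply]
  constructor
  · intro hx
    exact ⟨x, by rw [hWP, sub_mulVec, one_mulVec, ← mulVec_mulVec, hx, mulVec_zero, sub_zero]⟩
  · rintro ⟨v, rfl⟩
    rw [mulVec_mulVec, hvanish, zero_mulVec]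

end Projection

theorem stmt_11_general (m n : ℕ) (hm : 1 < m) (hmn : Nat.Coprime m n)
    (t : ℂ) (ht0 : t ≠ 0)
    (b : Fin m → ℤ) (hb : (n : ℤ) ∣ ∑ i, b i)
    (a : ℤ) (ha : ¬ (n : ℤ) ∣ a)
    (C X P W : Matrix (Fin m) (Fin m) ℂ)
    (hC : ∀ i j : Fin m, C i j =
      if (i : ℕ) + 1 = (j : ℕ) then 1
      else if (i : ℕ) = m - 1 ∧ (j : ℕ) = 0 then t else 0)
    (hX : X = C ^ n)
    (hP : P = Matrix.diagonal (fun i => if (n : ℤ) ∣ (b i + a) then 0 else 1))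
    (hW : W = (1 - (1 - P) * X⁻¹)⁻¹) :
    LinearMap.ker ((1 - P) * (1 - X⁻¹)).mulVecLin =
      LinearMap.range (W * P).mulVecLin := by
  have : NeZero m := ⟨by omega⟩
  obtain ⟨w, hw, hXw⟩ := exists_weightedShift_pow
    (u := fun i : Fin m => if (i : ℕ) = m - 1 then t else 1)
    (fun i => by split_ifs <;> simp [ht0]) 1 n
  rw [← cyclic_eq_weightedShift hm hC, ← hX] at hXw
  obtain ⟨i₀, hi₀⟩ := exists_not_dvd_add_of_coprime (by rwa [Fintype.card_fin]) hb ha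
  have hPidem : IsIdempotentElem P := by
    rw [hP, IsIdempotentElem, diagonal_mul_diagonal]
    congr 1
    funext i
    split_ifs <;> simp
  have hQ : 1 - P = diagonal fun i => if (n : ℤ) ∣ b i + a then 1 else 0 := by
    rw [hP, ← diagonal_one, diagonal_sub]
    congr 1
    funext i
    split_ifs <;> simp
  have hXQ : IsUnit (X - (1 - P)) := by
    rw [hXw, hQ]
    exact isUnit_weightedShift_sub_diagonal hw (if_neg hi₀)
      (Fin.exists_add_add_nsmul_eq_of_coprime hmn i₀)
  rw [hW]
  exact ker_mulVecLin_eq_range_nonsing_inv_mul hPidem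
    (isUnit_one_sub_mul_nonsing_inv (hXw ▸ isUnit_weightedShift hw _) hXQ)

/-- With `W := (I - (I - P) X⁻¹)⁻¹`, the kernel of `v ↦ (I - P)(I - X⁻¹) v` equals
the range of `v ↦ W P v`. -/
theorem stmt_11 (m n : ℕ) (hm : 1 < m) (hn : 1 < n) (hmn : Nat.Coprime m n)
    (t : ℂ) (ht0 : t ≠ 0)
    (b : Fin m → ℤ) (hb : (n : ℤ) ∣ ∑ i, b i)
    (a : ℤ) (ha : ¬ (n : ℤ) ∣ a)
    (C X P W : Matrix (Fin m) (Fin m) ℂ)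
    (hC : ∀ i j : Fin m, C i j =
      if (i : ℕ) + 1 = (j : ℕ) then 1
      else if (i : ℕ) = m - 1 ∧ (j : ℕ) = 0 then t else 0)
    (hX : X = C ^ n)
    (hP : P = Matrix.diagonal (fun i => if (n : ℤ) ∣ (b i + a) then 0 else 1))
    (hW : W = (1 - (1 - P) * X⁻¹)⁻¹) :
    LinearMap.ker ((1 - P) * (1 - X⁻¹)).mulVecLin =
      LinearMap.range (W * P).mulVecLin :=
  stmt_11_general m n hm hmn t ht0 b hb a ha C X P W hC hX hP hW
end

section
/- Suppose t^n ≠ 1. Set V := (I - P·Y^{-1})^{-1} and W := (I - (I - P)·X^{-1})^{-1}, and let K be the 2m×m complex matrix with upper m×m block (t^{-n}·(Σ_{i=0}^{m-1} X^i)·X)·(I - P) + W·P and lower m×m block (-t^{-n}·(Σ_{i=0}^{n-1} Y^i)·Y)·(I - P) - V·(I - X^{-1})·W·P. Let ∂₁ be the m×2m matrix whose left m×m block is I - X^{-1} and whose right m×m block is I - Y^{-1}. Then the linear map ℂ^m → ℂ^{2m}, v ↦ K·v, is injective and its range equals the kernel of the linear map ℂ^{2m} → ℂ^m, w ↦ ∂₁·w.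 -/
open Matrix Finset

/-!
Since `C ^ m = t • 1`, the matrices `X = C ^ n` and `Y` satisfy `X ^ m = Y ^ n = t ^ n • 1`, so by
the geometric series both `(1 - X⁻¹) t⁻ⁿ (∑ Xⁱ) X` and `(1 - Y⁻¹) t⁻ⁿ (∑ Yⁱ) Y` equal `1 - t⁻ⁿ`.
With `P` idempotent and commuting with `Y` this gives `∂₁ K = 0`. The matrix `K` has a left
inverse: combining its blocks and projecting with `1 - P` isolates the `(1 - P)`-part behind the
factor `(1 - t⁻ⁿ) - t⁻ⁿ (∑ Yⁱ) Y`, which `1 - Y` inverts up to the scalar `1 - t⁻ⁿ ≠ 0`; the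
`P`-part is then read off the upper block through `W⁻¹`. As `1 - Y⁻¹` is invertible, `∂₁` is onto,
so its kernel has dimension `m`, the rank of `K`.

The one input beyond this algebra is the invertibility of `1 - (1 - P) X⁻¹`: `X⁻¹` is a weighted
permutation matrix along the `m`-cycle `i ↦ i - n`, and `1 - P` has a zero on the diagonal because
`∑ bᵢ ≡ 0` and `a ≢ 0 (mod n)` while `m` is invertible mod `n`; so `(1 - P) X⁻¹` is nilpotent.
-/

theorem one_sub_mul_geom_sum_mul {R : Type*} [Ring R] {x y : R} (h : y * x = 1) (k : ℕ) :
    (1 - y) * ((∑ i ∈ range k, x ^ i) * x) = x ^ k - 1 := by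
  have hcomm : Commute x (∑ i ∈ range k, x ^ i) :=
    Commute.sum_right _ _ _ fun i _ => Commute.self_pow x i
  rw [← hcomm.eq, sub_mul, one_mul, ← mul_assoc, h, one_mul, ← sub_one_mul, mul_geom_sum]

namespace IsIdempotentElem

variable {R : Type*} [Ring R] {p a b : R}

theorem one_sub_mul_mul_eq_one (hp : IsIdempotentElem p) (hpa : Commute p a)
    (hab : (1 - a) * b = 1) : (1 - p * a) * (1 - p + p * b) = 1 := by
  have hpap : p * a * p = p * a := by rw [mul_assoc, ← hpa.eq, ← mul_assoc, hp.eq]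
  calc (1 - p * a) * (1 - p + p * b)
      = 1 - p + p * ((1 - a) * b) + (p * a * p - p * a) - (p * a * p - p * a) * b := by
        noncomm_ring
    _ = 1 := by rw [hpap, hab]; noncomm_ring

theorem one_sub_mul_of_one_sub_mul_mul_eq_one (hp : IsIdempotentElem p)
    (hb : (1 - p * a) * b = 1) : (1 - p) * b = 1 - p := by
  calc (1 - p) * b = (1 - p) * (1 - p * a) * b := by
        rw [mul_sub, mul_one, ← mul_assoc, hp.one_sub_mul_self, zero_mul, sub_zero]
    _ = 1 - p := by rw [mul_assoc, hb, mul_one]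

end IsIdempotentElem

theorem Equiv.Perm.IsCycleOn.prod_range_card_pow_apply {α M : Type*} [CommMonoid M]
    {f : Equiv.Perm α} {s : Finset α} (hf : f.IsCycleOn s) {a : α} (ha : a ∈ s) (g : α → M) :
    ∏ l ∈ range #s, g ((f ^ l) a) = ∏ x ∈ s, g x := by
  refine prod_nbij (fun l => (f ^ l) a) (fun l _ => hf.1.mapsTo.perm_pow l ha) ?_ ?_ fun _ _ => rfl
  · intro l₁ hl₁ l₂ hl₂ h
    exact ((hf.pow_apply_eq_pow_apply ha).mp h).eq_of_lt_of_lt (mem_range.mp hl₁) (mem_range.mp hl₂)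
  · intro x hx
    obtain ⟨l, hl, rfl⟩ := hf.exists_pow_eq ha hx
    exact ⟨l, mem_range.mpr hl, rfl⟩

theorem isCycleOn_finRotate_pow {m k : ℕ} (hm : 2 ≤ m) (hk : k.Coprime m) :
    (finRotate m ^ k).IsCycleOn Set.univ := by
  have hcyc := isCycle_finRotate_of_le hm
  have horder : orderOf (finRotate m) = m := by
    rw [hcyc.orderOf, support_finRotate_of_le hm, card_univ, Fintype.card_fin]
  have hsupp : (finRotate m ^ k).support = univ := by
    rw [Equiv.Perm.support_pow_coprime (by rwa [horder]), support_finRotate_of_le hm]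
  convert (hcyc.pow_iff.mpr (by rwa [horder])).isCycleOn
  ext x
  simp [← Equiv.Perm.mem_support, hsupp]

theorem isCycleOn_finRotate {m : ℕ} (hm : 2 ≤ m) : (finRotate m).IsCycleOn Set.univ := by
  simpa using isCycleOn_finRotate_pow hm (Nat.coprime_one_left m)

theorem exists_not_dvd_add {ι : Type*} [Fintype ι] {n a : ℤ} {b : ι → ℤ} (hb : n ∣ ∑ i, b i)
    (ha : ¬ n ∣ a) (hn : IsCoprime n (Fintype.card ι)) : ∃ i, ¬ n ∣ b i + a := by
  by_contra! h
  have hsum : n ∣ ∑ i, (b i + a) := dvd_sum fun i _ => h i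
  rw [sum_add_distrib, sum_const, card_univ, nsmul_eq_mul] at hsum
  exact ha (hn.dvd_of_dvd_mul_left ((dvd_add_right hb).mp hsum))

namespace Matrix

section WeightedPermMatrix

variable {ι R : Type*} [Fintype ι] [DecidableEq ι] [CommSemiring R]

def weightedPermMatrix (σ : Equiv.Perm ι) (w : ι → R) : Matrix ι ι R :=
  of fun i j => if σ i = j then w i else 0

omit [Fintype ι] in
@[simp]
theorem weightedPermMatrix_apply (σ : Equiv.Perm ι) (w : ι → R) (i j : ι) :
    weightedPermMatrix σ w i j = if σ i = j then w i else 0 := rfl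

theorem weightedPermMatrix_mul (σ τ : Equiv.Perm ι) (w v : ι → R) :
    weightedPermMatrix σ w * weightedPermMatrix τ v =
      weightedPermMatrix (τ * σ) (fun i => w i * v (σ i)) := by
  ext i j
  rw [mul_apply, sum_eq_single (σ i) (fun k _ hk => by simp [Ne.symm hk]) (by simp)]
  by_cases h : τ (σ i) = j <;> simp [h]

theorem weightedPermMatrix_pow (σ : Equiv.Perm ι) (w : ι → R) (k : ℕ) :
    weightedPermMatrix σ w ^ k =
      weightedPermMatrix (σ ^ k) (fun i => ∏ l ∈ range k, w ((σ ^ l) i)) := by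
  induction k with
  | zero => ext i j; by_cases h : i = j <;> simp [h]
  | succ k ih => rw [pow_succ, ih, weightedPermMatrix_mul, ← pow_succ']; simp [prod_range_succ]

theorem diagonal_mul_weightedPermMatrix (d : ι → R) (σ : Equiv.Perm ι) (w : ι → R) :
    diagonal d * weightedPermMatrix σ w = weightedPermMatrix σ (d * w) := by
  ext i j; simp [diagonal_mul, mul_ite]

theorem weightedPermMatrix_pow_card {σ : Equiv.Perm ι} (hσ : σ.IsCycleOn Set.univ) (w : ι → R) :
    weightedPermMatrix σ w ^ Fintype.card ι = (∏ i, w i) • 1 := by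
  have hσ' : σ.IsCycleOn ((univ : Finset ι) : Set ι) := by rwa [coe_univ]
  ext i j
  have hcard := hσ'.pow_card_apply (mem_univ i)
  rw [card_univ] at hcard
  rw [weightedPermMatrix_pow, weightedPermMatrix_apply, hcard, ← card_univ,
    hσ'.prod_range_card_pow_apply (mem_univ i)]
  by_cases h : i = j <;> simp [h]

theorem isNilpotent_weightedPermMatrix {σ : Equiv.Perm ι} (hσ : σ.IsCycleOn Set.univ)
    {w : ι → R} {i₀ : ι} (hw : w i₀ = 0) : IsNilpotent (weightedPermMatrix σ w) :=
  ⟨Fintype.card ι, by rw [weightedPermMatrix_pow_card hσ, prod_eq_zero (mem_univ i₀) hw, zero_smul]⟩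

end WeightedPermMatrix

section CyclicShift

variable {R : Type*} [CommSemiring R]

def cyclicShift (m : ℕ) (t : R) : Matrix (Fin m) (Fin m) R :=
  weightedPermMatrix (finRotate m) fun i => if (i : ℕ) = m - 1 then t else 1

theorem eq_cyclicShift {m : ℕ} (hm : 0 < m) {t : R} {C : Matrix (Fin m) (Fin m) R}
    (hC : ∀ i j : Fin m, C i j =
      if (i : ℕ) + 1 = (j : ℕ) then 1 else if (i : ℕ) = m - 1 ∧ (j : ℕ) = 0 then t else 0) :
    C = cyclicShift m t := by
  obtain ⟨m, rfl⟩ : ∃ k, m = k + 1 := ⟨m - 1, by omega⟩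
  ext i j
  have hrot : (finRotate (m + 1) i : ℕ) = if (i : ℕ) = m then 0 else (i : ℕ) + 1 := by
    rw [coe_finRotate]; simp [Fin.ext_iff]
  have := j.isLt
  simp only [cyclicShift, hC, weightedPermMatrix_apply, Fin.ext_iff, hrot, Nat.add_sub_cancel]
  by_cases hi : (i : ℕ) = m
  · simp only [hi, if_true, true_and]
    split_ifs <;> first | rfl | omega
  · simp only [hi, if_false, false_and]

theorem cyclicShift_pow_self {m : ℕ} (hm : 2 ≤ m) (t : R) : cyclicShift m t ^ m = t • 1 := by
  have h := weightedPermMatrix_pow_card (isCycleOn_finRotate hm)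
    (fun i : Fin m => if (i : ℕ) = m - 1 then t else 1)
  rwa [Fintype.card_fin, prod_eq_single (⟨m - 1, by omega⟩ : Fin m)
    (fun j _ hj => if_neg fun h => hj (Fin.ext h)) (by simp), if_pos rfl] at h

end CyclicShift

theorem isIdempotentElem_diagonal_ite {ι R : Type*} [Fintype ι] [DecidableEq ι] [Semiring R]
    (p : ι → Prop) [DecidablePred p] :
    IsIdempotentElem (diagonal fun i => if p i then (0 : R) else 1) := by
  rw [IsIdempotentElem, diagonal_mul_diagonal]
  congr 1; funext i; split_ifs <;> simp

theorem smul_diagonal_exp_pow {ι : Type*} [Fintype ι] [DecidableEq ι] {n : ℕ} (hn : n ≠ 0)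
    (t : ℂ) (b : ι → ℤ) :
    (t • diagonal fun i => Complex.exp (2 * Real.pi * Complex.I * b i / n)) ^ n = t ^ n • 1 := by
  have hroot (i : ι) : Complex.exp (2 * Real.pi * Complex.I * b i / n) ^ n = 1 := by
    rw [← Complex.exp_nat_mul, ← Complex.exp_int_mul_two_pi_mul_I (b i)]
    congr 1
    field_simp
  rw [smul_pow, diagonal_pow, ← diagonal_one]
  congr 2; funext i; exact hroot i

theorem injective_mulVecLin_and_range_eq_ker {𝕜 m n p : Type*} [Field 𝕜] [Fintype m]
    [Fintype n] [Fintype p] [DecidableEq m] [DecidableEq p] {K : Matrix n m 𝕜}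
    {D : Matrix p n 𝕜} {L : Matrix m n 𝕜} {R : Matrix n p 𝕜} (hLK : L * K = 1) (hDR : D * R = 1)
    (hDK : D * K = 0) (hcard : Fintype.card n = Fintype.card m + Fintype.card p) :
    Function.Injective K.mulVecLin ∧ LinearMap.range K.mulVecLin = LinearMap.ker D.mulVecLin := by
  have hinj : Function.Injective K.mulVecLin := by
    refine Function.LeftInverse.injective (g := L.mulVecLin) fun v => ?_
    simp [mulVec_mulVec, hLK]
  have hsurj : Function.Surjective D.mulVecLin := fun w => ⟨R *ᵥ w, by simp [mulVec_mulVec, hDR]⟩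
  refine ⟨hinj, Submodule.eq_of_le_of_finrank_eq ?_ ?_⟩
  · rintro _ ⟨v, rfl⟩
    simp [mulVec_mulVec, hDK]
  · have := LinearMap.finrank_range_add_finrank_ker D.mulVecLin
    rw [LinearMap.range_eq_top.mpr hsurj, finrank_top] at this
    simp only [Module.finrank_fintype_fun_eq_card] at this
    rw [LinearMap.finrank_range_of_inj hinj, Module.finrank_fintype_fun_eq_card]
    omega

section Field

variable {ι 𝕜 : Type*} [Fintype ι] [DecidableEq ι] [Field 𝕜]

theorem commute_nonsing_inv_right {A B : Matrix ι ι 𝕜} (h : Commute A B) : Commute A B⁻¹ := by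
  by_cases hB : IsUnit B.det
  · calc A * B⁻¹ = B⁻¹ * (B * A) * B⁻¹ := by rw [← mul_assoc, nonsing_inv_mul _ hB, one_mul]
      _ = B⁻¹ * A := by rw [← h.eq, mul_assoc, mul_assoc, mul_nonsing_inv _ hB, mul_one]
  · rw [nonsing_inv_apply_not_isUnit _ hB]
    exact Commute.zero_right A

variable {X Y P V W : Matrix ι ι 𝕜} {c : 𝕜} {k l : ℕ}

theorem inv_eq_smul_pow_pred (hk : k ≠ 0) (hc : c ≠ 0) (hX : X ^ k = c • 1) :
    X⁻¹ = c⁻¹ • X ^ (k - 1) := by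
  refine inv_eq_right_inv ?_
  rw [Matrix.mul_smul, ← pow_succ', Nat.sub_add_cancel (Nat.one_le_iff_ne_zero.mpr hk), hX,
    smul_smul, inv_mul_cancel₀ hc, one_smul]

theorem inv_mul_cancel_of_pow_eq_smul_one (hk : k ≠ 0) (hc : c ≠ 0) (hX : X ^ k = c • 1) :
    X⁻¹ * X = 1 := by
  rw [inv_eq_smul_pow_pred hk hc hX, Matrix.smul_mul, ← pow_succ,
    Nat.sub_add_cancel (Nat.one_le_iff_ne_zero.mpr hk), hX, smul_smul, inv_mul_cancel₀ hc,
    one_smul]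

theorem isNilpotent_diagonal_mul_inv_cyclicShift_pow {m n : ℕ} (hm : 2 ≤ m) (hn : n.Coprime m)
    {t : 𝕜} (ht : t ≠ 0) {d : Fin m → 𝕜} {i₀ : Fin m} (hd : d i₀ = 0) :
    IsNilpotent (diagonal d * (cyclicShift m t ^ n)⁻¹) := by
  have hCnm : (cyclicShift m t ^ n) ^ m = t ^ n • 1 := by
    rw [← pow_mul, mul_comm, pow_mul, cyclicShift_pow_self hm, smul_pow, one_pow]
  have hcop : (n * (m - 1)).Coprime m :=
    hn.mul_left ((Nat.coprime_self_sub_left (by omega)).mpr (Nat.coprime_one_left m))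
  rw [inv_eq_smul_pow_pred (by omega) (pow_ne_zero n ht) hCnm, Matrix.mul_smul, ← pow_mul,
    cyclicShift, weightedPermMatrix_pow, diagonal_mul_weightedPermMatrix]
  exact (isNilpotent_weightedPermMatrix (isCycleOn_finRotate_pow hm hcop) (i₀ := i₀)
    (by simp [hd])).smul _

theorem one_sub_inv_mul_smul_geom_sum_mul (hc : c ≠ 0) (hX : X⁻¹ * X = 1) (hXk : X ^ k = c • 1) :
    (1 - X⁻¹) * (c⁻¹ • ((∑ i ∈ range k, X ^ i) * X)) = (1 - c⁻¹) • 1 := by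
  rw [Matrix.mul_smul, one_sub_mul_geom_sum_mul hX, hXk, smul_sub, smul_smul, inv_mul_cancel₀ hc,
    one_smul, sub_smul, one_smul]

theorem one_sub_mul_smul_one_sub_smul_geom_sum_mul (hc : c ≠ 0) (hY : Y⁻¹ * Y = 1)
    (hYl : Y ^ l = c • 1) :
    (1 - Y) * ((1 - c⁻¹) • 1 - c⁻¹ • ((∑ i ∈ range l, Y ^ i) * Y)) = (1 - c⁻¹) • 1 := by
  have hSY := one_sub_inv_mul_smul_geom_sum_mul hc hY hYl
  set SY := c⁻¹ • ((∑ i ∈ range l, Y ^ i) * Y)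
  set u := (1 - c⁻¹) • (1 : Matrix ι ι 𝕜)
  clear_value SY
  calc (1 - Y) * (u - SY) = u - Y * u + Y * ((1 - Y⁻¹) * SY) + (Y * Y⁻¹ - 1) * SY := by
        noncomm_ring
    _ = u := by rw [hSY, mul_eq_one_comm.mp hY, sub_self, zero_mul, add_zero, sub_add_cancel]

theorem isUnit_det_one_sub_inv (hc : c ≠ 0) (hc1 : c ≠ 1) (hY : Y⁻¹ * Y = 1)
    (hYl : Y ^ l = c • 1) : IsUnit (1 - Y⁻¹).det := by
  have : 1 - c⁻¹ ≠ 0 := sub_ne_zero.mpr (by simpa [eq_comm] using hc1)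
  refine isUnit_det_of_right_inverse (B := (1 - c⁻¹)⁻¹ • c⁻¹ • ((∑ i ∈ range l, Y ^ i) * Y)) ?_
  rw [Matrix.mul_smul, one_sub_inv_mul_smul_geom_sum_mul hc hY hYl, smul_smul,
    inv_mul_cancel₀ this, one_smul]

noncomputable section

def boundaryMatrix (X Y : Matrix ι ι 𝕜) : Matrix ι (ι ⊕ ι) 𝕜 :=
  fromCols (1 - X⁻¹) (1 - Y⁻¹)

/-- The matrix `K`, for `c = t ^ n`, `k = m` and `l = n`. -/
def kernelMatrix (X Y P V W : Matrix ι ι 𝕜) (c : 𝕜) (k l : ℕ) : Matrix (ι ⊕ ι) ι 𝕜 :=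
  fromRows ((c⁻¹ • ((∑ i ∈ range k, X ^ i) * X)) * (1 - P) + W * P)
    ((-c⁻¹) • ((∑ i ∈ range l, Y ^ i) * Y) * (1 - P) - V * (1 - X⁻¹) * W * P)

end

theorem boundaryMatrix_mul_kernelMatrix (hc : c ≠ 0) (hX : X⁻¹ * X = 1) (hY : Y⁻¹ * Y = 1)
    (hXk : X ^ k = c • 1) (hYl : Y ^ l = c • 1) (hP : IsIdempotentElem P) (hPY : Commute P Y)
    (hV : (1 - P * Y⁻¹) * V = 1) (hW : (1 - (1 - P) * X⁻¹) * W = 1) :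
    boundaryMatrix X Y * kernelMatrix X Y P V W c k l = 0 := by
  have hYV : (1 - Y⁻¹) * V = 1 - Y⁻¹ * (1 - P) := by
    rw [show (1 : Matrix ι ι 𝕜) - Y⁻¹ = (1 - P * Y⁻¹) - (1 - P) * Y⁻¹ by noncomm_ring, sub_mul,
      hV, ((Commute.one_left Y⁻¹).sub_left (commute_nonsing_inv_right hPY)).eq, mul_assoc,
      hP.one_sub_mul_of_one_sub_mul_mul_eq_one hV]
  have hXW : (1 - X⁻¹) * W = 1 - P * (X⁻¹ * W) := by
    rw [show (1 : Matrix ι ι 𝕜) - X⁻¹ = (1 - (1 - P) * X⁻¹) - P * X⁻¹ by noncomm_ring, sub_mul,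
      hW, mul_assoc]
  have hQXW : (1 - P) * ((1 - X⁻¹) * W * P) = 0 := by
    calc _ = (1 - P) * P - (1 - P) * P * (X⁻¹ * W) * P := by rw [hXW]; noncomm_ring
      _ = 0 := by rw [hP.one_sub_mul_self, zero_mul, zero_mul, sub_zero]
  have hYVXW : (1 - Y⁻¹) * (V * (1 - X⁻¹) * W * P) = (1 - X⁻¹) * W * P := by
    calc _ = ((1 - Y⁻¹) * V) * ((1 - X⁻¹) * W * P) := by simp only [mul_assoc]
      _ = (1 - X⁻¹) * W * P - Y⁻¹ * ((1 - P) * ((1 - X⁻¹) * W * P)) := by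
          rw [hYV]; noncomm_ring
      _ = _ := by rw [hQXW, mul_zero, sub_zero]
  have hSX := one_sub_inv_mul_smul_geom_sum_mul hc hX hXk
  have hSY := one_sub_inv_mul_smul_geom_sum_mul hc hY hYl
  rw [boundaryMatrix, kernelMatrix, fromCols_mul_fromRows, neg_smul]
  set SX := c⁻¹ • ((∑ i ∈ range k, X ^ i) * X)
  set SY := c⁻¹ • ((∑ i ∈ range l, Y ^ i) * Y)
  calc (1 - X⁻¹) * (SX * (1 - P) + W * P) + (1 - Y⁻¹) * (-SY * (1 - P) - V * (1 - X⁻¹) * W * P)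
      = (1 - X⁻¹) * SX * (1 - P) - (1 - Y⁻¹) * SY * (1 - P) +
          ((1 - X⁻¹) * W * P - (1 - Y⁻¹) * (V * (1 - X⁻¹) * W * P)) := by noncomm_ring
    _ = 0 := by rw [hSX, hSY, hYVXW, sub_self, sub_self, add_zero]

theorem exists_mul_kernelMatrix_eq_one (hc : c ≠ 0) (hc1 : c ≠ 1) (hX : X⁻¹ * X = 1)
    (hY : Y⁻¹ * Y = 1) (hXk : X ^ k = c • 1) (hYl : Y ^ l = c • 1) (hP : IsIdempotentElem P)
    (hPY : Commute P Y) (hV : (1 - P * Y⁻¹) * V = 1) (hW : (1 - (1 - P) * X⁻¹) * W = 1) :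
    ∃ L : Matrix ι (ι ⊕ ι) 𝕜, L * kernelMatrix X Y P V W c k l = 1 := by
  have hc1' : 1 - c⁻¹ ≠ 0 := sub_ne_zero.mpr (by simpa [eq_comm] using hc1)
  have hQV := hP.one_sub_mul_of_one_sub_mul_mul_eq_one hV
  have hSX := one_sub_inv_mul_smul_geom_sum_mul hc hX hXk
  have hD := one_sub_mul_smul_one_sub_smul_geom_sum_mul hc hY hYl
  have hQSY : Commute (1 - P) (c⁻¹ • ((∑ i ∈ range l, Y ^ i) * Y)) :=
    ((Commute.one_left _).sub_left ((Commute.sum_right _ _ _ fun i _ =>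
      hPY.pow_right i).mul_right hPY)).smul_right _
  have hu : Commute ((1 - c⁻¹) • (1 : Matrix ι ι 𝕜)) (1 - P) := (Commute.one_left _).smul_left _
  rw [kernelMatrix, neg_smul]
  set SX := c⁻¹ • ((∑ i ∈ range k, X ^ i) * X)
  set SY := c⁻¹ • ((∑ i ∈ range l, Y ^ i) * Y)
  set u := (1 - c⁻¹) • (1 : Matrix ι ι 𝕜) with hu_def
  set E := (1 - c⁻¹)⁻¹ • (1 - Y)
  have hED : E * (u - SY) = 1 := by
    rw [Matrix.smul_mul, hD, hu_def, smul_smul, inv_mul_cancel₀ hc1', one_smul]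
  set F := 1 - (1 - P) * X⁻¹
  clear_value SX SY u E F
  -- `E (1 - P)` applied to `V (1 - X⁻¹) · upper + lower` recovers the `(1 - P)`-component
  have hQ : E * (1 - P) * (V * ((1 - X⁻¹) * (SX * (1 - P) + W * P)) +
      (-SY * (1 - P) - V * (1 - X⁻¹) * W * P)) = 1 - P := by
    calc _ = E * ((1 - P) * V * ((1 - X⁻¹) * SX) * (1 - P) - (1 - P) * SY * (1 - P)) := by
          noncomm_ring
      _ = E * (u - SY) * ((1 - P) * (1 - P)) := by
          rw [hSX, hQV, hQSY.eq, ← hu.eq]; noncomm_ring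
      _ = 1 - P := by rw [hED, one_mul, hP.one_sub.eq]
  refine ⟨fromCols (F + (1 - F * SX) * E * (1 - P) * V * (1 - X⁻¹)) ((1 - F * SX) * E * (1 - P)), ?_⟩
  calc _ = F * SX * (1 - P) + F * W * P + (1 - F * SX) * (E * (1 - P) *
      (V * ((1 - X⁻¹) * (SX * (1 - P) + W * P)) + (-SY * (1 - P) - V * (1 - X⁻¹) * W * P))) := by
        rw [fromCols_mul_fromRows]; noncomm_ring
    _ = 1 := by rw [hQ, hW]; noncomm_ring

theorem injective_kernelMatrix_and_range_eq_ker_boundaryMatrix (hc : c ≠ 0) (hc1 : c ≠ 1)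
    (hk : k ≠ 0) (hl : l ≠ 0) (hXk : X ^ k = c • 1) (hYl : Y ^ l = c • 1)
    (hP : IsIdempotentElem P) (hPY : Commute P Y) (hnil : IsNilpotent ((1 - P) * X⁻¹))
    (hV : V = (1 - P * Y⁻¹)⁻¹) (hW : W = (1 - (1 - P) * X⁻¹)⁻¹) :
    Function.Injective (kernelMatrix X Y P V W c k l).mulVecLin ∧
      LinearMap.range (kernelMatrix X Y P V W c k l).mulVecLin =
        LinearMap.ker (boundaryMatrix X Y).mulVecLin := by
  have hX := inv_mul_cancel_of_pow_eq_smul_one hk hc hXk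
  have hY := inv_mul_cancel_of_pow_eq_smul_one hl hc hYl
  have hY1 := isUnit_det_one_sub_inv hc hc1 hY hYl
  have hV' : (1 - P * Y⁻¹) * V = 1 := hV ▸ mul_nonsing_inv _ (isUnit_det_of_right_inverse
    (hP.one_sub_mul_mul_eq_one (commute_nonsing_inv_right hPY) (mul_nonsing_inv _ hY1)))
  have hW' : (1 - (1 - P) * X⁻¹) * W = 1 :=
    hW ▸ mul_nonsing_inv _ ((isUnit_iff_isUnit_det _).mp hnil.isUnit_one_sub)
  obtain ⟨L, hL⟩ := exists_mul_kernelMatrix_eq_one hc hc1 hX hY hXk hYl hP hPY hV' hW'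
  refine injective_mulVecLin_and_range_eq_ker hL (R := fromRows 0 (1 - Y⁻¹)⁻¹) ?_
    (boundaryMatrix_mul_kernelMatrix hc hX hY hXk hYl hP hPY hV' hW') (by simp)
  rw [boundaryMatrix, fromCols_mul_fromRows, mul_zero, zero_add, mul_nonsing_inv _ hY1]

end Field

end Matrix

/-- The columns of `K` form a basis of the kernel of the boundary map `∂₁` of the
twisted chain complex of `X_{T(m,n)}`. -/
theorem stmt_12 (m n : ℕ) (hm : 1 < m) (hn : 1 < n) (hmn : Nat.Coprime m n)
    (t : ℂ) (ht0 : t ≠ 0) (htn : t ^ n ≠ 1)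
    (b : Fin m → ℤ) (hb : (n : ℤ) ∣ ∑ i, b i)
    (a : ℤ) (ha : ¬ (n : ℤ) ∣ a)
    (C X Y P V W : Matrix (Fin m) (Fin m) ℂ)
    (hC : ∀ i j : Fin m, C i j =
      if (i : ℕ) + 1 = (j : ℕ) then 1
      else if (i : ℕ) = m - 1 ∧ (j : ℕ) = 0 then t else 0)
    (hX : X = C ^ n)
    (hY : Y = t • Matrix.diagonal
      (fun i => Complex.exp (2 * (Real.pi : ℂ) * Complex.I * (b i : ℂ) / (n : ℂ))))
    (hP : P = Matrix.diagonal (fun i => if (n : ℤ) ∣ (b i + a) then 0 else 1))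
    (hV : V = (1 - P * Y⁻¹)⁻¹)
    (hW : W = (1 - (1 - P) * X⁻¹)⁻¹)
    (K : Matrix (Fin m ⊕ Fin m) (Fin m) ℂ)
    (hK : K = Matrix.fromRows
      ((t ^ (-(n : ℤ)) • ((∑ i ∈ Finset.range m, X ^ i) * X)) * (1 - P) + W * P)
      ((-(t ^ (-(n : ℤ))) • ((∑ i ∈ Finset.range n, Y ^ i) * Y)) * (1 - P) -
        V * (1 - X⁻¹) * W * P))
    (D1 : Matrix (Fin m) (Fin m ⊕ Fin m) ℂ)
    (hD1 : D1 = Matrix.fromCols (1 - X⁻¹) (1 - Y⁻¹)) :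
    Function.Injective K.mulVecLin ∧
    LinearMap.range K.mulVecLin = LinearMap.ker D1.mulVecLin := by
  have hXm : X ^ m = t ^ n • 1 := by
    rw [hX, eq_cyclicShift (by omega) hC, ← pow_mul, mul_comm, pow_mul, cyclicShift_pow_self hm,
      smul_pow, one_pow]
  have hYn : Y ^ n = t ^ n • 1 := hY ▸ smul_diagonal_exp_pow (by omega) t b
  have hPY : Commute P Y := by rw [hP, hY]; exact (commute_diagonal _ _).smul_right t
  obtain ⟨i₀, hi₀⟩ := exists_not_dvd_add hb ha (by simpa using Nat.isCoprime_iff_coprime.mpr hmn.symm)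
  have hnil : IsNilpotent ((1 - P) * X⁻¹) := by
    rw [hP, ← diagonal_one, diagonal_sub, hX, eq_cyclicShift (by omega) hC]
    exact isNilpotent_diagonal_mul_inv_cyclicShift_pow hm hmn.symm ht0 (i₀ := i₀) (by simp [hi₀])
  rw [hK, hD1, _root_.zpow_neg, zpow_natCast]
  exact injective_kernelMatrix_and_range_eq_ker_boundaryMatrix (pow_ne_zero n ht0) htn
    (by omega) (by omega) hXm hYn (hP ▸ isIdempotentElem_diagonal_ite _) hPY hnil hV hW
end

section
/- We have det(I - X) = 1 - t^n and det(Σ_{i=0}^{m-1} X^i) = (1 - t^n)^{m-1}, where I is the m×m identity matrix. -/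
/-!
`C = diagonal (1, …, 1, t) * P` for the permutation matrix `P` of the rotation `i ↦ i + 1`
of `Fin m`, so `X = C ^ n` is again a diagonal matrix times the permutation matrix of the
rotation `i ↦ i + n`, with diagonal entries multiplying to `t ^ n`. Since `m` and `n` are
coprime, this rotation is a single `m`-cycle. In the Leibniz expansion of `det (1 - X)` only the
identity and the inverse cycle survive, giving `1 - t ^ n`; and `X ^ m = t ^ n • 1`.
Then `(∑ X ^ i) * (1 - X) = (1 - t ^ n) • 1`, and cancelling `det (1 - X) = 1 - t ^ n` gives the
second formula, first for the indeterminate `t = X` of `ℤ[X]`, where `1 - X ^ n ≠ 0`, and then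
for every `t` by specialisation.
-/

open Matrix Finset Equiv

namespace Equiv.Perm

variable {ι : Type*}

theorem IsCycle.eq_one_or_eq_of_forall_apply_eq_or_eq [Finite ι] {σ π : Perm ι} (hσ : σ.IsCycle)
    (hfix : ∀ x, σ x ≠ x) (h : ∀ x, π x = x ∨ π x = σ x) : π = 1 ∨ π = σ := by
  refine or_iff_not_imp_left.2 fun hπ => ?_
  obtain ⟨a, ha⟩ : ∃ a, π a ≠ a := by
    by_contra! H
    exact hπ (Equiv.ext H)
  have step : ∀ x, π x = σ x → π (σ x) = σ (σ x) := fun x hx =>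
    (h (σ x)).resolve_left fun hσx => hfix x (π.injective (hσx.trans hx.symm))
  have orbit : ∀ k : ℕ, π ((σ ^ k) a) = σ ((σ ^ k) a) := by
    intro k
    induction k with
    | zero => exact (h a).resolve_left ha
    | succ k ih => rw [pow_succ', mul_apply]; exact step _ ih
  ext x
  obtain ⟨k, rfl⟩ := hσ.exists_pow_eq (hfix a) (hfix x)
  exact orbit k

theorem prod_prod_range_pow_apply {M : Type*} [CommMonoid M] [Fintype ι] (σ : Perm ι)
    (w : ι → M) (k : ℕ) : ∏ i, ∏ j ∈ range k, w ((σ ^ j) i) = (∏ i, w i) ^ k := by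
  rw [prod_comm]
  simp_rw [Equiv.prod_comp]
  rw [prod_const, card_range]

variable [Fintype ι] [DecidableEq ι]

theorem IsCycle.prod_range_card_pow_apply {M : Type*} [CommMonoid M] {σ : Perm ι}
    (hσ : σ.IsCycle) (hsupp : σ.support = univ) (f : ι → M) (a : ι) :
    ∏ k ∈ range (Fintype.card ι), f ((σ ^ k) a) = ∏ i, f i := by
  have hcyc : σ.IsCycleOn (univ : Finset ι) := by
    rw [← hsupp, coe_support_eq_set_support]
    exact hσ.isCycleOn
  refine prod_nbij (fun k => (σ ^ k) a) (fun _ _ => mem_univ _) ?_ ?_ fun _ _ => rfl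
  · intro j hj k hk hjk
    have := (hcyc.pow_apply_eq_pow_apply (mem_univ a)).1 hjk
    exact Nat.ModEq.eq_of_lt_of_lt this (mem_range.1 hj) (mem_range.1 hk)
  · intro b _
    obtain ⟨k, hk, rfl⟩ := hcyc.exists_pow_eq (mem_univ a) (mem_univ b)
    exact ⟨k, mem_range.2 hk, rfl⟩

end Equiv.Perm

namespace Matrix

variable {ι R : Type*} [Fintype ι] [DecidableEq ι] [CommRing R]

theorem diagonal_mul_permMatrix_apply (w : ι → R) (σ : Perm ι) (i j : ι) :
    (diagonal w * σ.permMatrix R) i j = if σ i = j then w i else 0 := by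
  simp [diagonal_mul, PEquiv.toMatrix_apply, eq_comm]

theorem permMatrix_mul_diagonal (σ : Perm ι) (v : ι → R) :
    σ.permMatrix R * diagonal v = diagonal (v ∘ σ) * σ.permMatrix R := by
  ext i j
  rw [diagonal_mul_permMatrix_apply, PEquiv.toMatrix_toPEquiv_mul, submatrix_apply,
    diagonal_apply]
  simp [eq_comm]

theorem diagonal_mul_permMatrix_pow (w : ι → R) (σ : Perm ι) (k : ℕ) :
    (diagonal w * σ.permMatrix R) ^ k =
      diagonal (fun i => ∏ j ∈ range k, w ((σ ^ j) i)) * (σ ^ k).permMatrix R := by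
  induction k with
  | zero => simp
  | succ k ih =>
    rw [pow_succ, ih, mul_assoc, ← mul_assoc ((σ ^ k).permMatrix R), permMatrix_mul_diagonal,
      mul_assoc, ← mul_assoc, diagonal_mul_diagonal, ← permMatrix_mul, ← pow_succ']
    congr 2
    ext i
    simp [prod_range_succ]

theorem det_one_sub_diagonal_mul_permMatrix {σ : Perm ι} (hσ : σ.IsCycle)
    (hsupp : σ.support = univ) (w : ι → R) :
    det (1 - diagonal w * σ.permMatrix R) = 1 - ∏ i, w i := by
  have hfix : ∀ x, σ x ≠ x := fun x => Perm.mem_support.1 (hsupp ▸ mem_univ x)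
  have entry : ∀ i j, (1 - diagonal w * σ.permMatrix R) i j =
      (if i = j then 1 else 0) - if σ i = j then w i else 0 := fun i j => by
    rw [Matrix.sub_apply, one_apply, diagonal_mul_permMatrix_apply]
  rw [det_apply', Fintype.sum_eq_add 1 σ⁻¹ (inv_ne_one.2 hσ.ne_one).symm]
  · have hone : ∏ i, (1 - diagonal w * σ.permMatrix R) ((1 : Perm ι) i) i = 1 :=
      prod_eq_one fun i _ => by rw [entry, Perm.one_apply, if_pos rfl, if_neg (hfix i), sub_zero]
    have hinv : ∏ i, (1 - diagonal w * σ.permMatrix R) (σ⁻¹ i) i =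
        (-1) ^ Fintype.card ι * ∏ i, w i := by
      have hterm : ∀ i, (1 - diagonal w * σ.permMatrix R) (σ⁻¹ i) i = -w (σ⁻¹ i) := fun i => by
        rw [entry, if_neg fun h => hfix i (Perm.inv_eq_iff_eq.1 h).symm,
          if_pos (Perm.eq_inv_iff_eq.1 rfl), zero_sub]
      rw [Fintype.prod_congr _ _ hterm, prod_neg, card_univ, Equiv.prod_comp]
    have hsq : ((-1 : R) ^ Fintype.card ι) * (-1) ^ Fintype.card ι = 1 := by
      rw [← mul_pow, neg_one_mul, neg_neg, one_pow]
    rw [hone, hinv, Perm.sign_inv, hσ.sign, hsupp, card_univ, Perm.sign_one]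
    push_cast
    linear_combination (-∏ i, w i) * hsq
  · rintro π ⟨hπ1, hπσ⟩
    obtain ⟨i, hi1, hiσ⟩ : ∃ i, π i ≠ i ∧ π i ≠ σ⁻¹ i := by
      by_contra! H
      exact (hσ.inv.eq_one_or_eq_of_forall_apply_eq_or_eq
        (fun x h => hfix x (Perm.inv_eq_iff_eq.1 h).symm)
        fun x => or_iff_not_imp_left.2 (H x)).elim hπ1 hπσ
    have hzero : (1 - diagonal w * σ.permMatrix R) (π i) i = 0 := by
      rw [entry, if_neg hi1, if_neg fun h => hiσ (Perm.eq_inv_iff_eq.2 h), sub_zero]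
    rw [prod_eq_zero (mem_univ i) (f := fun j => (1 - diagonal w * σ.permMatrix R) (π j) j) hzero,
      mul_zero]

theorem diagonal_mul_permMatrix_pow_card {σ : Perm ι} (hσ : σ.IsCycle)
    (hsupp : σ.support = univ) (w : ι → R) :
    (diagonal w * σ.permMatrix R) ^ Fintype.card ι = (∏ i, w i) • 1 := by
  have hσm : σ ^ Fintype.card ι = 1 := by
    rw [← card_univ, ← hsupp, ← hσ.orderOf, pow_orderOf_eq_one]
  rw [diagonal_mul_permMatrix_pow, hσm, Matrix.permMatrix_one, mul_one, smul_one_eq_diagonal]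
  simp_rw [hσ.prod_range_card_pow_apply hsupp]

theorem det_geom_sum_of_pow_card_eq_smul_one [IsDomain R] [Nonempty ι] {A : Matrix ι ι R}
    {c : R} (hc : c ≠ 1) (hA : A ^ Fintype.card ι = c • 1) (hdet : det (1 - A) = 1 - c) :
    det (∑ i ∈ range (Fintype.card ι), A ^ i) = (1 - c) ^ (Fintype.card ι - 1) := by
  have key := congrArg det (geom_sum_mul_neg A (Fintype.card ι))
  have hsmul : (1 : Matrix ι ι R) - c • 1 = (1 - c) • 1 := by rw [sub_smul, one_smul]
  rw [det_mul, hdet, hA, hsmul, det_smul, det_one, mul_one,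
    ← pow_sub_one_mul Fintype.card_ne_zero] at key
  exact mul_right_cancel₀ (sub_ne_zero.2 hc.symm) key

end Matrix

section TwistedCycle

variable {R : Type*} [CommRing R] {m n : ℕ}

def twistedCycle (m : ℕ) (t : R) : Matrix (Fin m) (Fin m) R :=
  diagonal (fun i : Fin m => if (i : ℕ) = m - 1 then t else 1) * (finRotate m).permMatrix R

theorem twistedCycle_apply (t : R) (i j : Fin m) :
    twistedCycle m t i j =
      if (i : ℕ) + 1 = j then 1 else if (i : ℕ) = m - 1 ∧ (j : ℕ) = 0 then t else 0 := by
  obtain _ | k := m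
  · exact i.elim0
  simp only [twistedCycle, diagonal_mul_permMatrix_apply, Fin.ext_iff, coe_finRotate,
    Fin.val_last, Nat.add_sub_cancel]
  have := j.isLt
  split_ifs <;> first | rfl | omega

theorem map_twistedCycle {S : Type*} [CommRing S] (f : R →+* S) (t : R) :
    (twistedCycle m t).map f = twistedCycle m (f t) := by
  ext i j
  simp [twistedCycle_apply, apply_ite f]

theorem prod_twistedCycle_weight (hm : 0 < m) (t : R) :
    ∏ i : Fin m, (if (i : ℕ) = m - 1 then t else 1) = t := by
  rw [Fintype.prod_eq_single ⟨m - 1, by omega⟩ fun i hi => if_neg fun h => hi (Fin.ext h),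
    if_pos rfl]

theorem isCycle_finRotate_pow (hm : 1 < m) (hmn : m.Coprime n) : (finRotate m ^ n).IsCycle := by
  have hρ := isCycle_finRotate_of_le hm
  rw [hρ.pow_iff, hρ.orderOf, support_finRotate_of_le hm, card_univ, Fintype.card_fin]
  exact hmn.symm

theorem support_finRotate_pow (hm : 1 < m) (hmn : m.Coprime n) :
    (finRotate m ^ n).support = univ := by
  have hρ := isCycle_finRotate_of_le hm
  rw [← support_finRotate_of_le hm, hρ.support_pow_eq_iff, hρ.orderOf, support_finRotate_of_le hm,
    card_univ, Fintype.card_fin]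
  exact fun h => hm.ne' (hmn.eq_one_of_dvd h)

theorem exists_twistedCycle_pow_eq (hm : 0 < m) (t : R) (n : ℕ) :
    ∃ v : Fin m → R, ∏ i, v i = t ^ n ∧
      twistedCycle m t ^ n = diagonal v * (finRotate m ^ n).permMatrix R :=
  ⟨_, (Perm.prod_prod_range_pow_apply _ (fun i : Fin m => if (i : ℕ) = m - 1 then t else 1) n).trans
      (by rw [prod_twistedCycle_weight hm]),
    diagonal_mul_permMatrix_pow _ _ n⟩

theorem det_one_sub_twistedCycle_pow (hm : 1 < m) (hmn : m.Coprime n) (t : R) :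
    det (1 - twistedCycle m t ^ n) = 1 - t ^ n := by
  obtain ⟨v, hv, hpow⟩ := exists_twistedCycle_pow_eq (Nat.zero_lt_of_lt hm) t n
  rw [hpow, det_one_sub_diagonal_mul_permMatrix (isCycle_finRotate_pow hm hmn)
    (support_finRotate_pow hm hmn), hv]

theorem twistedCycle_pow_pow_self (hm : 1 < m) (hmn : m.Coprime n) (t : R) :
    (twistedCycle m t ^ n) ^ m = t ^ n • 1 := by
  obtain ⟨v, hv, hpow⟩ := exists_twistedCycle_pow_eq (Nat.zero_lt_of_lt hm) t n
  have := diagonal_mul_permMatrix_pow_card (isCycle_finRotate_pow hm hmn)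
    (support_finRotate_pow hm hmn) v
  rwa [Fintype.card_fin, hv, ← hpow] at this

theorem det_geom_sum_twistedCycle_pow (hm : 1 < m) (hmn : m.Coprime n) (t : R) :
    det (∑ i ∈ range m, (twistedCycle m t ^ n) ^ i) = (1 - t ^ n) ^ (m - 1) := by
  have hn : n ≠ 0 := by
    rintro rfl
    exact hm.ne' ((Nat.coprime_zero_right m).1 hmn)
  have : Nonempty (Fin m) := ⟨⟨0, by omega⟩⟩
  have universal : det (∑ i ∈ range m, (twistedCycle m (Polynomial.X : Polynomial ℤ) ^ n) ^ i) =
      (1 - Polynomial.X ^ n) ^ (m - 1) := by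
    simpa using det_geom_sum_of_pow_card_eq_smul_one
      (fun h => hn (by simpa using congrArg Polynomial.natDegree h))
      (by simpa using twistedCycle_pow_pow_self hm hmn _) (det_one_sub_twistedCycle_pow hm hmn _)
  let φ := Polynomial.eval₂RingHom (Int.castRingHom R) t
  have hφ : φ.mapMatrix (twistedCycle m Polynomial.X) = twistedCycle m t := by
    simpa [φ] using map_twistedCycle (m := m) φ Polynomial.X
  have := congrArg φ universal
  simp only [RingHom.map_det, map_sum, map_pow, hφ, map_sub, map_one] at this
  simpa [φ] using this

end TwistedCycle

theorem stmt_16_general (m n : ℕ) (hm : 1 < m) (hmn : Nat.Coprime m n)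
    (t : ℂ)
    (C X : Matrix (Fin m) (Fin m) ℂ)
    (hC : ∀ i j : Fin m, C i j =
      if (i : ℕ) + 1 = (j : ℕ) then 1
      else if (i : ℕ) = m - 1 ∧ (j : ℕ) = 0 then t else 0)
    (hX : X = C ^ n) :
    ((1 : Matrix (Fin m) (Fin m) ℂ) - X).det = 1 - t ^ n ∧
    (∑ i ∈ Finset.range m, X ^ i).det = (1 - t ^ n) ^ (m - 1) := by
  have hCt : C = twistedCycle m t := Matrix.ext fun i j => by rw [hC, twistedCycle_apply]
  subst hX hCt
  exact ⟨det_one_sub_twistedCycle_pow hm hmn t, det_geom_sum_twistedCycle_pow hm hmn t⟩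

/-- `det (I - X) = 1 - t^n` and `det (Σ_{i<m} X^i) = (1 - t^n)^(m-1)`. -/
theorem stmt_16 (m n : ℕ) (hm : 1 < m) (hn : 1 < n) (hmn : Nat.Coprime m n)
    (t : ℂ)
    (C X : Matrix (Fin m) (Fin m) ℂ)
    (hC : ∀ i j : Fin m, C i j =
      if (i : ℕ) + 1 = (j : ℕ) then 1
      else if (i : ℕ) = m - 1 ∧ (j : ℕ) = 0 then t else 0)
    (hX : X = C ^ n) :
    ((1 : Matrix (Fin m) (Fin m) ℂ) - X).det = 1 - t ^ n ∧
    (∑ i ∈ Finset.range m, X ^ i).det = (1 - t ^ n) ^ (m - 1) :=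
  stmt_16_general m n hm hmn t C X hC hX
end
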